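/- The group G is generated by the three involutions v, uv, and auv; in particular G is generated by involutions. -/

import Mathlib

namespace ZkDl

def n₁ (l : ℕ) : ℕ := 2 ^ (l - 1) + 1
def n₂ (l : ℕ) : ℕ := 2 ^ (l - 1) - 1

/-- The relations of the presentation
`⟨a, u, v | a^(2^l) = u^k = v^2 = 1, u a u⁻¹ = a^(n₁), v a v = a^(n₂), v u v = u⁻¹⟩`,
with generators `a = 0`, `u = 1`, `v = 2` in `Fin 3`. -/
def rels (l k : ℕ) : Set (FreeGroup (Fin 3)) :=
  { FreeGroup.of 0 ^ 2 ^ l,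
    FreeGroup.of 1 ^ k,
    FreeGroup.of 2 ^ 2,
    FreeGroup.of 1 * FreeGroup.of 0 * (FreeGroup.of 1)⁻¹ * (FreeGroup.of 0 ^ n₁ l)⁻¹,
    FreeGroup.of 2 * FreeGroup.of 0 * FreeGroup.of 2 * (FreeGroup.of 0 ^ n₂ l)⁻¹,
    FreeGroup.of 2 * FreeGroup.of 1 * FreeGroup.of 2 * FreeGroup.of 1 }

/-- The group `Z_{2^l} ⋊ D_k` given by the presentation above. -/
abbrev G (l k : ℕ) : Type := PresentedGroup (rels l k)

def a (l k : ℕ) : G l k := PresentedGroup.of 0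
def u (l k : ℕ) : G l k := PresentedGroup.of 1
def v (l k : ℕ) : G l k := PresentedGroup.of 2

end ZkDl

/-!
Since `v u v = u⁻¹`, the element `u v` is an involution; using also `v² = 1`,
`(a u v)² = a · u (v a v)(v u v) = a · u a^{n₂} u⁻¹ = a^{1 + n₁ n₂}`.
Here `1 + n₁ n₂ = 4^{l-1}` is a multiple of `2^l`, so `a u v` is an involution as well.
Finally `u = (u v) v⁻¹` and `a = (a u v)(u v)⁻¹`, so the three involutions generate `a`, `u`, `v`.
-/

section Involutions

variable {H : Type*} [Group H] {a u v : H}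

theorem mul_sq_eq_one_of_mul_mul_eq_inv (hvu : v * u * v = u⁻¹) : (u * v) ^ 2 = 1 :=
  calc (u * v) ^ 2 = u * (v * u * v) := by rw [sq]; group
    _ = 1 := by rw [hvu, mul_inv_cancel]

theorem mul_mul_sq_eq_pow (hv : v ^ 2 = 1) (hvu : v * u * v = u⁻¹) {m n : ℕ}
    (hua : u * a * u⁻¹ = a ^ m) (hva : v * a * v = a ^ n) :
    (a * u * v) ^ 2 = a ^ (m * n + 1) := by
  have hv' : v * v = 1 := by rw [← sq, hv]
  calc (a * u * v) ^ 2 = a * u * v * a * (v * v) * u * v := by rw [hv', mul_one, sq]; group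
    _ = a * u * (v * a * v) * (v * u * v) := by group
    _ = a * (u * a * u⁻¹) ^ n := by rw [hva, hvu, conj_pow]; group
    _ = a ^ (m * n + 1) := by rw [hua, ← pow_mul, pow_succ']

theorem Subgroup.closure_v_uv_auv (a u v : H) :
    closure {v, u * v, a * u * v} = closure {a, u, v} := by
  have hv : v ∈ closure {v, u * v, a * u * v} := subset_closure (by simp)
  have huv : u * v ∈ closure {v, u * v, a * u * v} := subset_closure (by simp)
  have hauv : a * u * v ∈ closure {v, u * v, a * u * v} := subset_closure (by simp)
  have ha' : a ∈ closure {a, u, v} := subset_closure (by simp)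
  have hu' : u ∈ closure {a, u, v} := subset_closure (by simp)
  have hv' : v ∈ closure {a, u, v} := subset_closure (by simp)
  have hu : u ∈ closure {v, u * v, a * u * v} := by simpa using mul_mem huv (inv_mem hv)
  have ha : a ∈ closure {v, u * v, a * u * v} := by
    simpa [mul_assoc] using mul_mem hauv (inv_mem huv)
  apply le_antisymm <;> rw [closure_le] <;> rintro x (rfl | rfl | rfl)
  exacts [hv', mul_mem hu' hv', mul_mem (mul_mem ha' hu') hv', ha, hu, hv]

end Involutions

namespace ZkDl

theorem two_pow_dvd_n₁_mul_n₂_add_one {l : ℕ} (hl : 2 ≤ l) : 2 ^ l ∣ n₁ l * n₂ l + 1 := by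
  have hp : 1 ≤ 2 ^ (l - 1) := Nat.one_le_two_pow
  have h : n₁ l * n₂ l + 1 = 2 ^ (l - 1) * 2 ^ (l - 1) := by
    unfold n₁ n₂; zify [hp]; ring
  rw [h, ← pow_add]
  exact pow_dvd_pow 2 (by omega)

variable (l k : ℕ)

theorem a_pow_two_pow : a l k ^ 2 ^ l = 1 :=
  PresentedGroup.one_of_mem (by simp [rels])

theorem v_sq : v l k ^ 2 = 1 :=
  PresentedGroup.one_of_mem (by simp [rels])

theorem u_mul_a_mul_u_inv : u l k * a l k * (u l k)⁻¹ = a l k ^ n₁ l := by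
  rw [← mul_inv_eq_one]
  exact PresentedGroup.one_of_mem (by simp [rels])

theorem v_mul_a_mul_v : v l k * a l k * v l k = a l k ^ n₂ l := by
  rw [← mul_inv_eq_one]
  exact PresentedGroup.one_of_mem (by simp [rels])

theorem v_mul_u_mul_v : v l k * u l k * v l k = (u l k)⁻¹ := by
  rw [← mul_eq_one_iff_eq_inv]
  exact PresentedGroup.one_of_mem (by simp [rels])

theorem closure_a_u_v : Subgroup.closure {a l k, u l k, v l k} = ⊤ := by
  rw [← PresentedGroup.closure_range_of]
  congr 1
  ext x
  simp [Fin.exists_fin_succ, a, u, v, eq_comm]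

end ZkDl

open ZkDl

theorem generated_by_involutions_general (l k : ℕ) (hl : 3 ≤ l) :
    (v l k) ^ 2 = 1 ∧ (u l k * v l k) ^ 2 = 1 ∧ (a l k * u l k * v l k) ^ 2 = 1 ∧
    Subgroup.closure {v l k, u l k * v l k, a l k * u l k * v l k} = ⊤ := by
  have hv := v_sq l k
  have hvu := v_mul_u_mul_v l k
  obtain ⟨c, hc⟩ := two_pow_dvd_n₁_mul_n₂_add_one (show 2 ≤ l by omega)
  refine ⟨hv, mul_sq_eq_one_of_mul_mul_eq_inv hvu, ?_, ?_⟩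
  · rw [mul_mul_sq_eq_pow hv hvu (u_mul_a_mul_u_inv l k) (v_mul_a_mul_v l k), hc, pow_mul,
      a_pow_two_pow, one_pow]
  · rw [Subgroup.closure_v_uv_auv, closure_a_u_v]

theorem generated_by_involutions (l k : ℕ) (hl : 3 ≤ l) (hk : 4 ∣ k) :
    (v l k) ^ 2 = 1 ∧ (u l k * v l k) ^ 2 = 1 ∧ (a l k * u l k * v l k) ^ 2 = 1 ∧
    Subgroup.closure {v l k, u l k * v l k, a l k * u l k * v l k} = ⊤ :=
  generated_by_involutions_general l k hl
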